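/- arXiv:2603.15929 — 2 statements merged into one kernel-verified Lean document; each statement's English description precedes it below -/
import Mathlib

section
/- If b : R^3 -> R^3 is C^2, satisfies the Killing equation ∂_i b_j + ∂_j b_i = 0, and each component is periodic with period 1 in each coordinate, then b is constant. -/
/-!
Differentiating the Killing equation shows that `T k i j = ∂_k ∂_i b_j` is antisymmetric in
`(i, j)`, while it is symmetric in `(k, i)` by Schwarz's theorem; a form with both symmetries
vanishes. Hence `Db` is a constant `L`, so `b (x + v) - b x = L v`, and periodicity forces
`L (Pi.single i 1) = 0` for every `i`, i.e. `L = 0`.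
-/

noncomputable section

abbrev V3 := Fin 3 → ℝ

def pderiv (i : Fin 3) (F : V3 → ℝ) : V3 → ℝ :=
  fun x => fderiv ℝ F x (Pi.single i 1)

theorem eq_zero_of_symm_of_antisymm {α G : Type*} [AddCommGroup G] [IsAddTorsionFree G]
    {T : α → α → α → G} (hsymm : ∀ a b c, T a b c = T b a c)
    (hanti : ∀ a b c, T a b c = -T a c b) (a b c : α) : T a b c = 0 := by
  refine self_eq_neg.mp ?_
  calc T a b c = -T a c b := hanti a b c
    _ = -T c a b := by rw [hsymm]
    _ = T c b a := by rw [hanti c a b, neg_neg]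
    _ = T b c a := hsymm c b a
    _ = -T b a c := hanti b c a
    _ = -T a b c := by rw [hsymm]

theorem ContinuousLinearMap.pi_ext_one {ι F : Type*} [Fintype ι] [DecidableEq ι]
    [NormedAddCommGroup F] [NormedSpace ℝ F] {L M : (ι → ℝ) →L[ℝ] F}
    (h : ∀ i, L (Pi.single i 1) = M (Pi.single i 1)) : L = M :=
  coe_injective <| (Pi.basisFun ℝ ι).ext fun i => by simpa using h i

theorem apply_eq_sub_of_fderiv_eq_const {E F : Type*} [NormedAddCommGroup E] [NormedSpace ℝ E]
    [NormedAddCommGroup F] [NormedSpace ℝ F] {f : E → F} {L : E →L[ℝ] F}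
    (hf : Differentiable ℝ f) (hL : ∀ x, fderiv ℝ f x = L) (x v : E) :
    L v = f (x + v) - f x := by
  have hconst : ∀ y z, f y - L y = f z - L z :=
    is_const_of_fderiv_eq_zero (hf.sub L.differentiable) fun y => by
      rw [fderiv_fun_sub (hf y) L.differentiableAt, hL, L.fderiv, sub_self]
  have := hconst (x + v) x
  rw [map_add] at this
  linear_combination (norm := module) -this

section Killing

variable {ι : Type*} [Fintype ι] [DecidableEq ι]

def IsKillingField (b : (ι → ℝ) → ι → ℝ) : Prop :=
  ∀ x i j, fderiv ℝ b x (Pi.single i 1) j + fderiv ℝ b x (Pi.single j 1) i = 0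

theorem IsKillingField.fderiv_fderiv_eq_zero {b : (ι → ℝ) → ι → ℝ} (hK : IsKillingField b)
    (hb : ContDiff ℝ 2 b) (x : ι → ℝ) : fderiv ℝ (fderiv ℝ b) x = 0 := by
  set T : ι → ι → ι → ℝ :=
    fun k i j => fderiv ℝ (fderiv ℝ b) x (Pi.single k 1) (Pi.single i 1) j
  have hsymm : ∀ k i j, T k i j = T i k j := fun k i j => by
    simp only [T, (hb.contDiffAt.isSymmSndFDerivAt (by simp)) (Pi.single k 1)]
  have hanti : ∀ k i j, T k i j = -T k j i := fun k i j => by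
    -- `Φ ∘ Db` vanishes identically by the Killing equation, hence so does its derivative.
    let Φ : ((ι → ℝ) →L[ℝ] ι → ℝ) →L[ℝ] ℝ :=
      ContinuousLinearMap.proj j ∘L ContinuousLinearMap.apply ℝ (ι → ℝ) (Pi.single i 1) +
        ContinuousLinearMap.proj i ∘L ContinuousLinearMap.apply ℝ (ι → ℝ) (Pi.single j 1)
    have hD : HasFDerivAt (fderiv ℝ b) (fderiv ℝ (fderiv ℝ b) x) x :=
      ((hb.fderiv_right le_rfl).differentiable one_ne_zero x).hasFDerivAt
    have hzero : Φ ∘L fderiv ℝ (fderiv ℝ b) x = 0 :=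
      (Φ.hasFDerivAt.comp x hD).unique <| by
        simpa [Φ, Function.comp_def, hK _ i j] using hasFDerivAt_const (0 : ℝ) x
    have hk := congr($hzero (Pi.single k 1))
    simp only [Φ, ContinuousLinearMap.comp_apply, add_apply,
      ContinuousLinearMap.apply_apply, ContinuousLinearMap.proj_apply,
      zero_apply] at hk
    exact eq_neg_of_add_eq_zero_left hk
  refine ContinuousLinearMap.pi_ext_one fun k => ContinuousLinearMap.pi_ext_one fun i => ?_
  funext j
  exact eq_zero_of_symm_of_antisymm hsymm hanti k i j

end Killing

theorem pderiv_eq_fderiv_apply {b : V3 → V3} {x : V3} (hb : DifferentiableAt ℝ b x)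
    (i j : Fin 3) : pderiv i (fun y => b y j) x = fderiv ℝ b x (Pi.single i 1) j := by
  rw [pderiv, fderiv_apply hb]
  rfl

/-- A `C²` Killing vector field on `ℝ³` that is `1`-periodic in each coordinate is constant. -/
theorem periodic_killing_field_constant (b : V3 → V3)
    (hb : ContDiff ℝ 2 b)
    (hKilling : ∀ (i j : Fin 3) (x : V3),
      pderiv i (fun y => b y j) x + pderiv j (fun y => b y i) x = 0)
    (hper : ∀ (x : V3) (i : Fin 3), b (x + Pi.single i 1) = b x) :
    ∃ b₀ : V3, ∀ x : V3, b x = b₀ := by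
  have hdiff : Differentiable ℝ b := hb.differentiable two_ne_zero
  have hK : IsKillingField b := fun x i j => by
    simpa only [pderiv_eq_fderiv_apply (hdiff x)] using hKilling i j x
  have hDb : ∀ x, fderiv ℝ b x = fderiv ℝ b 0 := fun x =>
    is_const_of_fderiv_eq_zero ((hb.fderiv_right le_rfl).differentiable one_ne_zero)
      (hK.fderiv_fderiv_eq_zero hb) x 0
  have hDb0 : fderiv ℝ b 0 = 0 := ContinuousLinearMap.pi_ext_one fun i => by
    rw [apply_eq_sub_of_fderiv_eq_const hdiff hDb 0, hper, sub_self, zero_apply]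
  exact ⟨b 0, fun x => is_const_of_fderiv_eq_zero hdiff (fun y => (hDb y).trans hDb0) x 0⟩
end
end

section
/- Let f : R^3 -> R be positive and C^1 with ∇ log f having at most polynomial growth, and suppose that for Lebesgue-a.e. (equivalently, all, by continuity) pairs (v,w) the vector ∇log f(v) - ∇log f(w) is parallel to v - w. Then ∇ log f is an affine map of the specific form ∇log f(v) = b + 2c v for some b in R^3 and c in R; equivalently, log f(v) = a + b·v + c‖v‖² for some constants a, b, c. -/
/-!
Writing `s v := ∇log f(v)`, we have `s v - s 0 = t(v) v` for some scalar `t(v)`. Comparing this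
with `s v - s u ∥ v - u` gives `(t(v) - t) v = (t(u) - t) u`, so `t(v) = t(u)` whenever `v` and
`u` are linearly independent; in dimension at least two any two nonzero vectors are linked
through a third vector independent of both, hence `t` is constant and `s v = b + 2c v`. The
function `log f - (⟪b, v⟫ + c‖v‖²)` then has zero derivative everywhere, so it is constant.
-/

noncomputable section

abbrev E3 := EuclideanSpace ℝ (Fin 3)

/-- The gradient of `log f`, componentwise. -/
def scoreVec (f : E3 → ℝ) (v : E3) : Fin 3 → ℝ :=
  fun i => fderiv ℝ f v (EuclideanSpace.single i 1) / f v

open Submodule RealInnerProductSpace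

theorem eq_zero_and_eq_zero_of_smul_eq_smul_of_notMem_span {K V : Type*} [Field K]
    [AddCommGroup V] [Module K V] {v u : V} (hv : v ≠ 0) (hu : u ∉ K ∙ v) {a b : K}
    (h : a • v = b • u) : a = 0 ∧ b = 0 := by
  have hb : b = 0 := by
    by_contra hb
    refine hu (mem_span_singleton.2 ⟨b⁻¹ * a, ?_⟩)
    rw [mul_smul, h, inv_smul_smul₀ hb]
  rw [hb, zero_smul, smul_eq_zero] at h
  exact ⟨h.resolve_right hv, hb⟩

theorem exists_eq_add_smul_of_forall_sub_parallel {K V : Type*} [Field K] [AddCommGroup V]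
    [Module K V] (hV : 1 < Module.finrank K V) {s : V → V}
    (hs : ∀ v w, ∃ t : K, s v - s w = t • (v - w)) :
    ∃ c : K, ∀ v, s v = s 0 + c • v := by
  choose slope hslope using fun v => hs v 0
  simp only [sub_zero] at hslope
  have slope_eq_of_notMem_span (v u : V) (hv : v ≠ 0) (hu : u ∉ K ∙ v) :
      slope v = slope u := by
    obtain ⟨t, ht⟩ := hs v u
    have key : (slope v - t) • v = (slope u - t) • u := by
      linear_combination (norm := module) ht - hslope v + hslope u
    obtain ⟨hvt, hut⟩ := eq_zero_and_eq_zero_of_smul_eq_smul_of_notMem_span hv hu key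
    rw [sub_eq_zero.1 hvt, sub_eq_zero.1 hut]
  have exists_notMem_span (v : V) : ∃ u, u ∉ K ∙ v := by
    have : (K ∙ v) < ⊤ := span_lt_top_of_card_lt_finrank (by simpa using hV)
    obtain ⟨u, -, hu⟩ := SetLike.exists_of_lt this
    exact ⟨u, hu⟩
  have slope_eq (v w : V) (hv : v ≠ 0) (hw : w ≠ 0) : slope v = slope w := by
    obtain ⟨u, hu⟩ := exists_notMem_span v
    by_cases hwv : w ∈ K ∙ v
    · have huw : u ∉ K ∙ w := fun h => hu ((span_singleton_le_iff_mem _ _).2 hwv h)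
      rw [slope_eq_of_notMem_span v u hv hu, slope_eq_of_notMem_span w u hw huw]
    · exact slope_eq_of_notMem_span v w hv hwv
  have : Nontrivial V := Module.nontrivial_of_finrank_pos (zero_lt_one.trans hV)
  obtain ⟨v₀, hv₀⟩ := exists_ne (0 : V)
  refine ⟨slope v₀, fun v => ?_⟩
  rcases eq_or_ne v 0 with rfl | hv
  · simp
  · rw [← slope_eq v v₀ hv hv₀, ← hslope v, add_sub_cancel]

theorem eq_add_inner_add_mul_norm_sq_of_hasFDerivAt {E : Type*} [NormedAddCommGroup E]
    [InnerProductSpace ℝ E] {g : E → ℝ} {b : E} {c : ℝ}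
    (hg : ∀ v, HasFDerivAt g (innerSL ℝ (b + (2 * c) • v)) v) (v : E) :
    g v = g 0 + ⟪b, v⟫ + c * ‖v‖ ^ 2 := by
  set q : E → ℝ := fun v => ⟪b, v⟫ + c * ‖v‖ ^ 2
  have hq (v : E) : HasFDerivAt q (innerSL ℝ (b + (2 * c) • v)) v := by
    refine ((innerSL ℝ b).hasFDerivAt.add
      ((hasStrictFDerivAt_norm_sq v).hasFDerivAt.const_mul c)).congr_fderiv ?_
    ext w
    simp
    ring
  have hgq (v : E) : HasFDerivAt (g - q) (0 : E →L[ℝ] ℝ) v := by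
    simpa using (hg v).sub (hq v)
  have := is_const_of_fderiv_eq_zero (fun v => (hgq v).differentiableAt)
    (fun v => (hgq v).fderiv) v 0
  simp only [Pi.sub_apply, q, inner_zero_right, norm_zero] at this
  linarith

theorem EuclideanSpace.eq_innerSL_toLp_apply_single {ι : Type*} [Fintype ι] [DecidableEq ι]
    (L : EuclideanSpace ℝ ι →L[ℝ] ℝ) :
    L = innerSL ℝ (WithLp.toLp 2 fun i => L (EuclideanSpace.single i 1)) := by
  refine ContinuousLinearMap.coe_injective ((EuclideanSpace.basisFun ι ℝ).toBasis.ext fun i => ?_)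
  simp [EuclideanSpace.inner_single_right]

theorem hasFDerivAt_log_scoreVec {f : E3 → ℝ} {v : E3} (hf : DifferentiableAt ℝ f v)
    (hfv : f v ≠ 0) :
    HasFDerivAt (fun w => Real.log (f w)) (innerSL ℝ (WithLp.toLp 2 (scoreVec f v))) v := by
  refine (hf.hasFDerivAt.log hfv).congr_fderiv
    ((EuclideanSpace.eq_innerSL_toLp_apply_single _).trans ?_)
  congr 2
  funext i
  exact inv_mul_eq_div (f v) _

theorem score_differences_parallel_implies_quadratic_general (f : E3 → ℝ)
    (hf_pos : ∀ v, 0 < f v)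
    (hf_smooth : ContDiff ℝ 1 f)
    (hpar : ∀ v w : E3, ∃ t : ℝ, ∀ i : Fin 3,
      scoreVec f v i - scoreVec f w i = t * (v i - w i)) :
    ∃ (a : ℝ) (b : Fin 3 → ℝ) (c : ℝ),
      (∀ (v : E3) (i : Fin 3), scoreVec f v i = b i + 2 * c * v i) ∧
      (∀ v : E3, Real.log (f v) = a + (∑ i, b i * v i) + c * ‖v‖ ^ 2) := by
  set b := WithLp.toLp 2 (scoreVec f 0)
  obtain ⟨c, hc⟩ : ∃ c : ℝ, ∀ v, WithLp.toLp 2 (scoreVec f v) = b + (2 * c) • v := by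
    obtain ⟨c, hc⟩ := exists_eq_add_smul_of_forall_sub_parallel
      (s := fun v : E3 => WithLp.toLp 2 (scoreVec f v)) (by simp)
      fun v w => (hpar v w).imp fun t ht => by ext i; simpa using ht i
    exact ⟨c / 2, by simpa [mul_div_cancel₀] using hc⟩
  have hlog (v : E3) :
      HasFDerivAt (fun w => Real.log (f w)) (innerSL ℝ (b + (2 * c) • v)) v :=
    hc v ▸ hasFDerivAt_log_scoreVec (hf_smooth.differentiable one_ne_zero v) (hf_pos v).ne'
  refine ⟨Real.log (f 0), scoreVec f 0, c, fun v i => by simpa using congr_arg (· i) (hc v),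
    fun v => ?_⟩
  rw [eq_add_inner_add_mul_norm_sq_of_hasFDerivAt hlog v]
  simp [b, PiLp.inner_apply, mul_comm]

/-- Null-space characterization: if `∇log f(v) - ∇log f(w)` is always parallel to
`v - w`, then `log f` is a quadratic `a + b·v + c‖v‖²` with isotropic quadratic part,
i.e. `∇log f(v) = b + 2cv`. -/
theorem score_differences_parallel_implies_quadratic (f : E3 → ℝ)
    (hf_pos : ∀ v, 0 < f v)
    (hf_smooth : ContDiff ℝ 1 f)
    (hgrowth : ∃ (C : ℝ) (K : ℕ), ∀ (v : E3) (i : Fin 3),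
      |scoreVec f v i| ≤ C * (1 + ‖v‖) ^ K)
    (hpar : ∀ v w : E3, ∃ t : ℝ, ∀ i : Fin 3,
      scoreVec f v i - scoreVec f w i = t * (v i - w i)) :
    ∃ (a : ℝ) (b : Fin 3 → ℝ) (c : ℝ),
      (∀ (v : E3) (i : Fin 3), scoreVec f v i = b i + 2 * c * v i) ∧
      (∀ v : E3, Real.log (f v) = a + (∑ i, b i * v i) + c * ‖v‖ ^ 2) :=
  score_differences_parallel_implies_quadratic_general f hf_pos hf_smooth hpar
end
end
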